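/- Let C₀ ≥ 1 be a real constant and let f, g : [0, ∞) → [0, ∞) be functions with g continuous and f(τ) ≤ g(τ) for all τ ≥ 0. Suppose that for all 0 ≤ τ₁ ≤ τ₂ one has g(τ₂) + ∫_{τ₁}^{τ₂} g(τ) dτ ≤ C₀ g(τ₁) + C₀ f(0) (τ₂ − τ₁). Then g(τ) ≤ C₀ (1 + C₀) g(0) for all τ ≥ 0. -/
import Mathlib


open MeasureTheory Set

/-- **Bootstrap lemma for uniform boundedness of the N-energy.**
If `f, g : [0,∞) → [0,∞)` with `g` continuous, `f ≤ g`, and for all `0 ≤ τ₁ ≤ τ₂`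
`g(τ₂) + ∫_{τ₁}^{τ₂} g ≤ C₀ g(τ₁) + C₀ f(0)(τ₂ - τ₁)` for some `C₀ ≥ 1`,
then `g(τ) ≤ C₀(1 + C₀) g(0)` for all `τ ≥ 0`. -/
theorem energy_boundedness_bootstrap
    (C₀ : ℝ) (hC₀ : 1 ≤ C₀)
    (f g : ℝ → ℝ)
    (hf0 : ∀ τ, 0 ≤ τ → 0 ≤ f τ)
    (hg0 : ∀ τ, 0 ≤ τ → 0 ≤ g τ)
    (hgc : ContinuousOn g (Ici 0))
    (hfg : ∀ τ, 0 ≤ τ → f τ ≤ g τ)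
    (hmain : ∀ τ₁ τ₂, 0 ≤ τ₁ → τ₁ ≤ τ₂ →
      g τ₂ + ∫ τ in τ₁..τ₂, g τ ≤ C₀ * g τ₁ + C₀ * f 0 * (τ₂ - τ₁)) :
    ∀ τ, 0 ≤ τ → g τ ≤ C₀ * (1 + C₀) * g 0 := by
  intro τ hτ
  have hg00 : 0 ≤ g 0 := hg0 0 le_rfl
  have hf0g : f 0 ≤ g 0 := hfg 0 le_rfl
  have hC₀0 : (0:ℝ) < C₀ := lt_of_lt_of_le one_pos hC₀
  set K : ℝ := C₀ * g 0 with hK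
  have hKtarget : K ≤ C₀ * (1 + C₀) * g 0 := by
    rw [hK]; nlinarith [mul_nonneg (mul_nonneg hC₀0.le hC₀0.le) hg00]
  -- the set of times in [0, τ] where g is below K
  set S : Set ℝ := Icc 0 τ ∩ g ⁻¹' (Iic K) with hS
  have h0S : (0:ℝ) ∈ S := ⟨⟨le_rfl, hτ⟩, le_mul_of_one_le_left hg00 hC₀⟩
  have hSne : S.Nonempty := ⟨0, h0S⟩
  have hSbdd : BddAbove S := ⟨τ, fun s hs => hs.1.2⟩
  have hgcIcc : ContinuousOn g (Icc 0 τ) := hgc.mono Icc_subset_Ici_self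
  have hSclosed : IsClosed S :=
    hgcIcc.preimage_isClosed_of_isClosed isClosed_Icc isClosed_Iic
  set a : ℝ := sSup S with ha
  have haS : a ∈ S := hSclosed.csSup_mem hSne hSbdd
  have ha0 : 0 ≤ a := haS.1.1
  have haτ : a ≤ τ := haS.1.2
  have hgaK : g a ≤ K := haS.2
  rcases eq_or_lt_of_le haτ with heq | hlt
  · -- a = τ : g τ ≤ K directly
    calc g τ = g a := by rw [heq]
    _ ≤ K := hgaK
    _ ≤ _ := hKtarget
  · -- a < τ : on (a, τ], g > K
    have hgt : ∀ s ∈ Ioc a τ, K ≤ g s := by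
      intro s hs
      by_contra h
      push_neg at h
      have hsS : s ∈ S := ⟨⟨ha0.trans hs.1.le, hs.2⟩, h.le⟩
      exact absurd (le_csSup hSbdd hsS) (not_le.mpr hs.1)
    -- but also g a = limit from the right ≥ K:
    have hgaK' : K ≤ g a := by
      have htends : Filter.Tendsto g (nhdsWithin a (Ioi a)) (nhds (g a)) := by
        have := (hgc a (mem_Ici.mpr ha0)).tendsto
        exact this.mono_left (nhdsWithin_mono a (fun x hx => le_of_lt (lt_of_le_of_lt ha0 hx)))
      refine ge_of_tendsto htends ?_
      filter_upwards [Ioc_mem_nhdsGT_of_mem ⟨le_rfl, hlt⟩] with s hs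
      exact hgt s hs
    -- integrability
    have hint : IntervalIntegrable g volume a τ := by
      apply ContinuousOn.intervalIntegrable
      rw [uIcc_of_le haτ]
      exact hgc.mono (fun x hx => le_trans ha0 hx.1)
    -- integral lower bound
    have hIlb : K * (τ - a) ≤ ∫ t in a..τ, g t := by
      have : ∫ t in a..τ, K ≤ ∫ t in a..τ, g t := by
        apply intervalIntegral.integral_mono_on haτ intervalIntegrable_const hint
        intro s hs
        rcases eq_or_lt_of_le hs.1 with h | h
        · rw [← h]; exact hgaK'
        · exact hgt s ⟨h, hs.2⟩
      rwa [intervalIntegral.integral_const, smul_eq_mul, mul_comm] at this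
    have hmain' := hmain a τ ha0 haτ
    -- assemble
    have hfK : C₀ * f 0 ≤ K := by
      rw [hK]; exact mul_le_mul_of_nonneg_left hf0g hC₀0.le
    have hτa : 0 ≤ τ - a := sub_nonneg.mpr haτ
    have : g τ ≤ C₀ * K := by nlinarith [mul_le_mul_of_nonneg_right hfK hτa]
    calc g τ ≤ C₀ * K := this
    _ = C₀ * C₀ * g 0 := by rw [hK]; ring
    _ ≤ C₀ * (1 + C₀) * g 0 := by nlinarith
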